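/- Let G be a group, and a₁, …, a_k, b₁, …, b_k elements of G such that: each a_i commutes with each a_j, each b_i commutes with each b_j, a_i commutes with b_j whenever i ≠ j, and a_i b_i a_i = b_i a_i b_i for each i. Then for any n_1, …, n_k ∈ {−1, 1}, the elements A = a₁ⁿ¹⋯a_kⁿᵏ and B = b₁ⁿ¹⋯b_kⁿᵏ satisfy the braid relation A·B·A = B·A·B. -/
import Mathlib

private lemma braid_list {G : Type*} [Group G] {ι : Type*} (a b : ι → G)
    (haa : ∀ i j, Commute (a i) (a j))
    (hbb : ∀ i j, Commute (b i) (b j))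
    (hab : ∀ i j, i ≠ j → Commute (a i) (b j))
    (hbraid : ∀ i, a i * b i * a i = b i * a i * b i) :
    ∀ l : List ι, l.Nodup →
      (l.map a).prod * (l.map b).prod * (l.map a).prod
        = (l.map b).prod * (l.map a).prod * (l.map b).prod := by
  intro l
  induction l with
  | nil => simp
  | cons i t ih =>
    intro hnd
    rw [List.nodup_cons] at hnd
    obtain ⟨hit, hnd⟩ := hnd
    have IH := ih hnd
    set At := (t.map a).prod with hAt
    set Bt := (t.map b).prod with hBt
    have h1 : Commute (a i) At := Commute.list_prod_right _ _ (by
      intro x hx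
      obtain ⟨j, hj, rfl⟩ := List.mem_map.mp hx
      exact haa i j)
    have h2 : Commute (b i) Bt := Commute.list_prod_right _ _ (by
      intro x hx
      obtain ⟨j, hj, rfl⟩ := List.mem_map.mp hx
      exact hbb i j)
    have h3 : Commute (a i) Bt := Commute.list_prod_right _ _ (by
      intro x hx
      obtain ⟨j, hj, rfl⟩ := List.mem_map.mp hx
      exact hab i j (by rintro rfl; exact hit hj))
    have h4 : Commute (b i) At := Commute.list_prod_right _ _ (by
      intro x hx
      obtain ⟨j, hj, rfl⟩ := List.mem_map.mp hx
      exact (hab j i (by rintro rfl; exact hit hj)).symm)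
    simp only [List.map_cons, List.prod_cons, ← hAt, ← hBt]
    calc a i * At * (b i * Bt) * (a i * At)
        = (a i * b i * a i) * (At * Bt * At) := by
          simp only [mul_assoc]
          rw [h4.symm.left_comm, h3.symm.left_comm, h1.symm.left_comm]
      _ = (b i * a i * b i) * (Bt * At * Bt) := by rw [hbraid i, IH]
      _ = b i * Bt * (a i * At) * (b i * Bt) := by
          simp only [mul_assoc]
          rw [h3.symm.left_comm, h4.symm.left_comm, h2.symm.left_comm]

theorem stmt_17 {G : Type*} [Group G] (k : ℕ) (a b : Fin k → G) (n : Fin k → ℤ)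
    (haa : ∀ i j, a i * a j = a j * a i)
    (hbb : ∀ i j, b i * b j = b j * b i)
    (hab : ∀ i j, i ≠ j → a i * b j = b j * a i)
    (hbraid : ∀ i, a i * b i * a i = b i * a i * b i)
    (hn : ∀ i, n i = 1 ∨ n i = -1)
    (A B : G)
    (hA : A = ((List.finRange k).map (fun i => a i ^ n i)).prod)
    (hB : B = ((List.finRange k).map (fun i => b i ^ n i)).prod) :
    A * B * A = B * A * B := by
  subst hA hB
  refine braid_list (fun i => a i ^ n i) (fun i => b i ^ n i)
    (fun i j => Commute.zpow_zpow (haa i j) _ _)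
    (fun i j => Commute.zpow_zpow (hbb i j) _ _)
    (fun i j hij => Commute.zpow_zpow (hab i j hij) _ _)
    (fun i => ?_) _ (List.nodup_finRange k)
  show a i ^ n i * b i ^ n i * a i ^ n i = b i ^ n i * a i ^ n i * b i ^ n i
  rcases hn i with h | h <;> rw [h]
  · simpa using hbraid i
  · have := congrArg Inv.inv (hbraid i)
    simp only [mul_inv_rev] at this
    simp only [zpow_neg_one]
    simp only [mul_assoc] at this ⊢
    exact this
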